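/- arXiv:2105.06166 — 4 statements merged into one kernel-verified Lean document; each statement's English description precedes it below -/
import Mathlib

section
/- Let P be a pattern of length m, T a text of length n ≥ m, and k a non-negative integer. If i and i' are two distinct elements of Occ_k(P,T), then ρ := |i'−i| is a 2k-period of P, i.e., HD(P[ρ..m), P[0..m−ρ)) ≤ 2k. -/
/-- Hamming distance between (the length-`m` prefixes of) two strings,
given as functions `ℕ → α`. -/
def hd {α : Type*} [DecidableEq α] (m : ℕ) (X Y : ℕ → α) : ℕ :=
  ((Finset.range m).filter fun i => X i ≠ Y i).card

/-- The set of `k`-mismatch occurrences of a pattern `P` of length `m`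
in a text `T` of length `n ≥ m`. -/
def Occ {α : Type*} [DecidableEq α] (k m n : ℕ) (P T : ℕ → α) : Set ℕ :=
  {i | i ≤ n - m ∧ hd m P (fun t => T (i + t)) ≤ k}

lemma aux {α : Type*} [DecidableEq α] (m n k : ℕ)
    (P T : ℕ → α) (i i' : ℕ)
    (hi : i ∈ Occ k m n P T) (hi' : i' ∈ Occ k m n P T) (hlt : i < i') :
    hd (m - (i' - i)) (fun t => P ((i' - i) + t)) P ≤ 2 * k := by
  set ρ := i' - i with hρ
  have hii' : i + ρ = i' := by omega
  set A := (Finset.range m).filter (fun s => P s ≠ T (i + s)) with hA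
  set B := (Finset.range m).filter (fun t => P t ≠ T (i' + t)) with hB
  have hAk : A.card ≤ k := hi.2
  have hBk : B.card ≤ k := hi'.2
  have hsub : (Finset.range (m - ρ)).filter (fun t => P (ρ + t) ≠ P t)
      ⊆ A.image (· - ρ) ∪ B := by
    intro t ht
    simp only [Finset.mem_filter, Finset.mem_range] at ht
    obtain ⟨htm, hne⟩ := ht
    by_cases hc : P (ρ + t) = T (i + (ρ + t))
    · apply Finset.mem_union_right
      simp only [hB, Finset.mem_filter, Finset.mem_range]
      refine ⟨by omega, ?_⟩
      have : i' + t = i + (ρ + t) := by omega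
      rw [this, ← hc]
      exact fun h => hne h.symm
    · apply Finset.mem_union_left
      rw [Finset.mem_image]
      exact ⟨ρ + t, by simp [hA, Finset.mem_filter]; exact ⟨by omega, hc⟩, by omega⟩
  calc hd (m - ρ) (fun t => P (ρ + t)) P
      ≤ (A.image (· - ρ) ∪ B).card := Finset.card_le_card hsub
    _ ≤ (A.image (· - ρ)).card + B.card := Finset.card_union_le _ _
    _ ≤ A.card + B.card := Nat.add_le_add_right Finset.card_image_le _
    _ ≤ 2 * k := by omega

/-- if `i ≠ i'` are both `k`-mismatch occurrences of `P` in `T`, then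
`ρ := |i'−i|` is a `2k`-period of `P`, i.e. `HD(P[ρ..m), P[0..m−ρ)) ≤ 2k`. -/
theorem stmt_4 {α : Type*} [DecidableEq α] (m n k : ℕ) (hmn : m ≤ n)
    (P T : ℕ → α) (i i' : ℕ)
    (hi : i ∈ Occ k m n P T) (hi' : i' ∈ Occ k m n P T) (hne : i ≠ i') :
    hd (m - (max i i' - min i i'))
      (fun t => P ((max i i' - min i i') + t)) P ≤ 2 * k := by
  rcases lt_or_gt_of_ne hne with h | h
  · rw [max_eq_right h.le, min_eq_left h.le]
    exact aux m n k P T i i' hi hi' h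
  · rw [max_eq_left h.le, min_eq_right h.le]
    exact aux m n k P T i' i hi' hi h
end

section
/- Let P be a pattern of length m, T a text of length n with m ≤ n ≤ 2m, and k a non-negative integer. If i and i' are two distinct elements of Occ_k(P,T) and ρ := |i'−i|, then ρ is an (8k+ρ)-period of the string T' := T[min Occ_k(P,T) .. m + max Occ_k(P,T)). -/
/-- The (finite) set of `k`-mismatch occurrences of a pattern `P` of length `m`
in a text `T` of length `n ≥ m`. -/
def OccF {α : Type*} [DecidableEq α] (k m n : ℕ) (P T : ℕ → α) : Finset ℕ :=
  (Finset.range (n - m + 1)).filter fun i => hd m P (fun t => T (i + t)) ≤ k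

lemma hd_comm {α : Type*} [DecidableEq α] (m : ℕ) (X Y : ℕ → α) : hd m X Y = hd m Y X := by
  unfold hd
  congr 1
  ext t
  simp [ne_comm]

lemma hd_mono {α : Type*} [DecidableEq α] {l l' : ℕ} (h : l ≤ l') (X Y : ℕ → α) :
    hd l X Y ≤ hd l' X Y := by
  unfold hd
  apply Finset.card_le_card
  apply Finset.filter_subset_filter
  intro t ht
  simp only [Finset.mem_range] at *
  omega

lemma hd_triangle {α : Type*} [DecidableEq α] (l : ℕ) (X Y Z : ℕ → α) :
    hd l X Z ≤ hd l X Y + hd l Y Z := by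
  unfold hd
  calc ((Finset.range l).filter fun i => X i ≠ Z i).card
      ≤ (((Finset.range l).filter fun i => X i ≠ Y i) ∪
          ((Finset.range l).filter fun i => Y i ≠ Z i)).card := by
        apply Finset.card_le_card
        intro t ht
        simp only [Finset.mem_filter, Finset.mem_union] at *
        rcases ht with ⟨h1, h2⟩
        by_cases h : X t = Y t
        · exact Or.inr ⟨h1, fun hy => h2 (h.trans hy)⟩
        · exact Or.inl ⟨h1, h⟩
    _ ≤ _ := Finset.card_union_le _ _

lemma card_filter_Ico_eq {α : Type*} [DecidableEq α] (c l e : ℕ) (he : e = c + l) (X Y : ℕ → α) :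
    ((Finset.Ico c e).filter fun t => X t ≠ Y t).card
      = hd l (fun s => X (c + s)) (fun s => Y (c + s)) := by
  subst he
  unfold hd
  rw [← Finset.card_image_of_injective
    ((Finset.range l).filter fun s => X (c + s) ≠ Y (c + s))
    (show Function.Injective (c + ·) from fun x y h => by simpa using h)]
  congr 1
  ext t
  simp only [Finset.mem_image, Finset.mem_filter, Finset.mem_range, Finset.mem_Ico]
  constructor
  · rintro ⟨⟨h1, h2⟩, hQ⟩
    exact ⟨t - c, ⟨by omega, by rw [show c + (t - c) = t by omega]; exact hQ⟩, by omega⟩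
  · rintro ⟨s, ⟨hs, hQ⟩, rfl⟩
    exact ⟨⟨by omega, by omega⟩, hQ⟩

lemma hd_shift {α : Type*} [DecidableEq α] (d l : ℕ) (X Y : ℕ → α) :
    hd l (fun s => X (d + s)) (fun s => Y (d + s)) ≤ hd (d + l) X Y := by
  unfold hd
  rw [← Finset.card_image_of_injective
    ((Finset.range l).filter fun s => X (d + s) ≠ Y (d + s))
    (show Function.Injective (d + ·) from fun x y h => by simpa using h)]
  apply Finset.card_le_card
  intro t ht
  simp only [Finset.mem_image, Finset.mem_filter, Finset.mem_range] at *
  obtain ⟨s, ⟨hs, hQ⟩, rfl⟩ := ht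
  exact ⟨by omega, hQ⟩

lemma card_filter_split (c1 c2 N : ℕ) (h1 : c1 ≤ c2) (h2 : c2 ≤ N)
    (Q : ℕ → Prop) [DecidablePred Q] :
    ((Finset.range N).filter Q).card ≤ ((Finset.Ico 0 c1).filter Q).card
      + ((Finset.Ico c1 c2).filter Q).card + ((Finset.Ico c2 N).filter Q).card := by
  have hU : Finset.range N = Finset.Ico 0 c1 ∪ Finset.Ico c1 c2 ∪ Finset.Ico c2 N := by
    rw [Finset.Ico_union_Ico_eq_Ico (Nat.zero_le c1) h1,
      Finset.Ico_union_Ico_eq_Ico (Nat.zero_le c2) h2, Finset.range_eq_Ico]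
  rw [hU, Finset.filter_union, Finset.filter_union]
  exact (Finset.card_union_le _ _).trans (Nat.add_le_add_right (Finset.card_union_le _ _) _)

theorem stmt_5 {α : Type*} [DecidableEq α] (m n k : ℕ) (hmn : m ≤ n) (hn : n ≤ 2 * m)
    (P T : ℕ → α) (i i' : ℕ)
    (hi : i ∈ OccF k m n P T) (hi' : i' ∈ OccF k m n P T) (hne : i ≠ i') :
    hd ((m + (OccF k m n P T).max' ⟨i, hi⟩ - (OccF k m n P T).min' ⟨i, hi⟩)
          - (max i i' - min i i'))
      (fun t => T ((OccF k m n P T).min' ⟨i, hi⟩ + (max i i' - min i i') + t))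
      (fun t => T ((OccF k m n P T).min' ⟨i, hi⟩ + t))
      ≤ 8 * k + (max i i' - min i i') := by
  classical
  set S := OccF k m n P T with hS
  set a := S.min' ⟨i, hi⟩ with ha_def
  set b := S.max' ⟨i, hi⟩ with hb_def
  set j := min i i' with hj_def
  set j' := max i i' with hj'_def
  set ρ := j' - j with hρ_def
  have memS : ∀ x ∈ S, x ≤ n - m ∧ hd m P (fun t => T (x + t)) ≤ k := by
    intro x hx
    rw [hS, OccF, Finset.mem_filter, Finset.mem_range] at hx
    exact ⟨by omega, hx.2⟩
  have hjS : j ∈ S := by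
    rw [hj_def]
    rcases le_total i i' with h | h
    · rw [min_eq_left h]; exact hi
    · rw [min_eq_right h]; exact hi'
  have hj'S : j' ∈ S := by
    rw [hj'_def]
    rcases le_total i i' with h | h
    · rw [max_eq_right h]; exact hi'
    · rw [max_eq_left h]; exact hi
  have haS : a ∈ S := S.min'_mem _
  have hbS : b ∈ S := S.max'_mem _
  have haj : a ≤ j := S.min'_le j hjS
  have hjj' : j ≤ j' := min_le_max
  have hj'b : j' ≤ b := S.le_max' j' hj'S
  have hbnm : b ≤ n - m := (memS b hbS).1
  have hnm : n - m ≤ m := by omega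
  have Ka : hd m P (fun t => T (a + t)) ≤ k := (memS a haS).2
  have Kb : hd m P (fun t => T (b + t)) ≤ k := (memS b hbS).2
  have Kj : hd m P (fun t => T (j + t)) ≤ k := (memS j hjS).2
  have Kj' : hd m P (fun t => T (j' + t)) ≤ k := (memS j' hj'S).2
  have key := card_filter_split (j - a) (j - a + m) (m + b - a - ρ) (by omega) (by omega)
    (fun t => T (a + ρ + t) ≠ T (a + t))
  -- the approximate period of P
  have hPE : hd (m - ρ) (fun u => P (ρ + u)) P ≤ k + k := by
    have h1 := hd_triangle (m - ρ) (fun u => P (ρ + u)) (fun u => T (j + (ρ + u))) P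
    have h2 : hd (m - ρ) (fun u => P (ρ + u)) (fun u => T (j + (ρ + u)))
        ≤ hd m P (fun t => T (j + t)) := by
      have h := hd_shift ρ (m - ρ) P (fun t => T (j + t))
      rwa [show ρ + (m - ρ) = m by omega] at h
    have h3 : (fun u => T (j + (ρ + u))) = fun u => T (j' + u) :=
      funext fun u => congrArg T (by omega)
    rw [h3] at h1 h2
    have h4 : hd (m - ρ) (fun u => T (j' + u)) P ≤ k := by
      calc hd (m - ρ) (fun u => T (j' + u)) P ≤ hd m (fun u => T (j' + u)) P :=
            hd_mono (by omega) _ _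
        _ = hd m P (fun t => T (j' + t)) := hd_comm _ _ _
        _ ≤ k := Kj'
    omega
  -- left piece
  have hL : ((Finset.Ico 0 (j - a)).filter fun t => T (a + ρ + t) ≠ T (a + t)).card
      ≤ k + hd (j - a) (fun u => P (ρ + u)) P + k := by
    rw [card_filter_Ico_eq 0 (j - a) (j - a) (by omega) (fun t => T (a + ρ + t)) (fun t => T (a + t))]
    have e1 : (fun s => T (a + ρ + (0 + s))) = fun s => T (a + (ρ + s)) :=
      funext fun s => congrArg T (by omega)
    have e2 : (fun s => T (a + (0 + s))) = fun s => T (a + s) :=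
      funext fun s => congrArg T (by omega)
    rw [e1, e2]
    have t1 := hd_triangle (j - a) (fun s => T (a + (ρ + s))) (fun s => P (ρ + s))
      (fun s => T (a + s))
    have t2 := hd_triangle (j - a) (fun s => P (ρ + s)) P (fun s => T (a + s))
    have b1 : hd (j - a) (fun s => T (a + (ρ + s))) (fun s => P (ρ + s)) ≤ k := by
      calc hd (j - a) (fun s => T (a + (ρ + s))) (fun s => P (ρ + s))
          ≤ hd (ρ + (j - a)) (fun t => T (a + t)) P := hd_shift ρ (j - a) (fun t => T (a + t)) P
        _ ≤ hd m (fun t => T (a + t)) P := hd_mono (by omega) _ _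
        _ = hd m P (fun t => T (a + t)) := hd_comm _ _ _
        _ ≤ k := Ka
    have b3 : hd (j - a) P (fun s => T (a + s)) ≤ k :=
      (hd_mono (by omega : j - a ≤ m) _ _).trans Ka
    omega
  -- middle piece
  have hM : ((Finset.Ico (j - a) (j - a + m)).filter fun t => T (a + ρ + t) ≠ T (a + t)).card ≤ k + k := by
    rw [card_filter_Ico_eq (j - a) m (j - a + m) rfl (fun t => T (a + ρ + t)) (fun t => T (a + t))]
    have e1 : (fun s => T (a + ρ + (j - a + s))) = fun s => T (j' + s) :=
      funext fun s => congrArg T (by omega)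
    have e2 : (fun s => T (a + (j - a + s))) = fun s => T (j + s) :=
      funext fun s => congrArg T (by omega)
    rw [e1, e2]
    have t1 := hd_triangle m (fun s => T (j' + s)) P (fun s => T (j + s))
    have b1 : hd m (fun s => T (j' + s)) P ≤ k := (hd_comm m _ _).le.trans Kj'
    omega
  -- right piece
  have hR : ((Finset.Ico (j - a + m) (m + b - a - ρ)).filter fun t => T (a + ρ + t) ≠ T (a + t)).card
      ≤ k + ((Finset.Ico (j + m - b) (m - ρ)).filter fun u => P (ρ + u) ≠ P u).card + k := by
    rw [card_filter_Ico_eq (j - a + m) (b - j') (m + b - a - ρ) (by omega)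
      (fun t => T (a + ρ + t)) (fun t => T (a + t))]
    have e1 : (fun s => T (a + ρ + (j - a + m + s))) = fun s => T (b + (j' + m - b + s)) :=
      funext fun s => congrArg T (by omega)
    have e2 : (fun s => T (a + (j - a + m + s))) = fun s => T (b + (j + m - b + s)) :=
      funext fun s => congrArg T (by omega)
    rw [e1, e2]
    have t1 := hd_triangle (b - j') (fun s => T (b + (j' + m - b + s)))
      (fun s => P (j' + m - b + s)) (fun s => T (b + (j + m - b + s)))
    have t2 := hd_triangle (b - j') (fun s => P (j' + m - b + s))
      (fun s => P (j + m - b + s)) (fun s => T (b + (j + m - b + s)))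
    have b1 : hd (b - j') (fun s => T (b + (j' + m - b + s))) (fun s => P (j' + m - b + s)) ≤ k := by
      calc hd (b - j') (fun s => T (b + (j' + m - b + s))) (fun s => P (j' + m - b + s))
          ≤ hd (j' + m - b + (b - j')) (fun t => T (b + t)) P :=
            hd_shift (j' + m - b) (b - j') (fun t => T (b + t)) P
        _ = hd m (fun t => T (b + t)) P := by rw [show j' + m - b + (b - j') = m by omega]
        _ = hd m P (fun t => T (b + t)) := hd_comm _ _ _
        _ ≤ k := Kb
    have b2 : hd (b - j') (fun s => P (j' + m - b + s)) (fun s => P (j + m - b + s))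
        = ((Finset.Ico (j + m - b) (m - ρ)).filter fun u => P (ρ + u) ≠ P u).card := by
      have e3 : (fun s => P (j' + m - b + s)) = fun s => P (ρ + (j + m - b + s)) :=
        funext fun s => congrArg P (by omega)
      rw [e3]
      rw [card_filter_Ico_eq (j + m - b) (b - j') (m - ρ) (by omega) (fun u => P (ρ + u)) P]
    have b3 : hd (b - j') (fun s => P (j + m - b + s)) (fun s => T (b + (j + m - b + s))) ≤ k := by
      calc hd (b - j') (fun s => P (j + m - b + s)) (fun s => T (b + (j + m - b + s)))
          ≤ hd (j + m - b + (b - j')) P (fun t => T (b + t)) :=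
            hd_shift (j + m - b) (b - j') P (fun t => T (b + t))
        _ ≤ hd m P (fun t => T (b + t)) := hd_mono (by omega) _ _
        _ ≤ k := Kb
    omega
  -- sharing the period budget between left and right pieces
  have hshare : hd (j - a) (fun u => P (ρ + u)) P
      + ((Finset.Ico (j + m - b) (m - ρ)).filter fun u => P (ρ + u) ≠ P u).card
      ≤ hd (m - ρ) (fun u => P (ρ + u)) P := by
    unfold hd
    rw [← Finset.card_union_of_disjoint]
    · apply Finset.card_le_card
      intro t ht
      simp only [Finset.mem_union, Finset.mem_filter, Finset.mem_range, Finset.mem_Ico] at *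
      rcases ht with ⟨h1, h2⟩ | ⟨h1, h2⟩
      · exact ⟨by omega, h2⟩
      · exact ⟨by omega, h2⟩
    · apply Finset.disjoint_filter_filter
      simp only [Finset.disjoint_left, Finset.mem_range, Finset.mem_Ico]
      intro t ht
      omega
  -- assemble
  calc hd (m + b - a - ρ) (fun t => T (a + ρ + t)) (fun t => T (a + t))
      ≤ _ := key
    _ ≤ 8 * k + ρ := by omega
end

section
/- Let X be a string over an alphabet Σ, let d be a non-negative integer, and let ρ be a d-period of X. Then Σ_{c ∈ Σ} ‖Δ_ρ[X_c]‖_0 ≤ 2(d+ρ), where the sum ranges over all characters c of the alphabet. -/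
/-- Characteristic function `X_c : ℤ → ℤ` of the length-`len` string `X` and character `c`:
`X_c(i) = 1` iff `0 ≤ i < len` and `X[i] = c`. -/
def charFun {α : Type*} [DecidableEq α] (len : ℕ) (X : ℕ → α) (c : α) : ℤ → ℤ :=
  fun i => if 0 ≤ i ∧ i < len ∧ X i.toNat = c then 1 else 0

/-- Backward difference of `f : ℤ → ℤ` due to `ρ`: `Δ_ρ[f](i) = f(i) − f(i−ρ)`. -/
def bdiff (ρ : ℕ) (f : ℤ → ℤ) : ℤ → ℤ :=
  fun i => f i - f (i - ρ)

/-- if `ρ` is a `d`-period of the length-`m` string `X`, then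
`Σ_{c ∈ Σ} ‖Δ_ρ[X_c]‖₀ ≤ 2(d+ρ)`. -/
theorem stmt_6 {α : Type*} [Fintype α] [DecidableEq α] (m d ρ : ℕ) (X : ℕ → α)
    (hρ : 1 ≤ ρ) (hρm : ρ ≤ m)
    (hper : hd (m - ρ) (fun t => X (ρ + t)) X ≤ d) :
    ∑ c : α, Set.ncard {i : ℤ | bdiff ρ (charFun m X c) i ≠ 0} ≤ 2 * (d + ρ) := by
  classical
  have hcf0 : ∀ (c : α) (i : ℤ), ¬(0 ≤ i ∧ i < (m : ℤ)) → charFun m X c i = 0 := by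
    intro c i h
    unfold charFun
    rw [if_neg]
    tauto
  have hcf1 : ∀ (c : α) (i : ℤ), 0 ≤ i → i < (m : ℤ) →
      charFun m X c i = if X i.toNat = c then 1 else 0 := by
    intro c i h1 h2
    unfold charFun
    by_cases h : X i.toNat = c <;> simp [h, h1, h2]
  have hbd : ∀ c i, bdiff ρ (charFun m X c) i ≠ 0 ↔
      charFun m X c i ≠ charFun m X c (i - ρ) := by
    intro c i; simp [bdiff, sub_ne_zero]
  -- the support is contained in `[0, m+ρ)`
  have hset : ∀ c, {i : ℤ | bdiff ρ (charFun m X c) i ≠ 0}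
      = ↑((Finset.Ico (0:ℤ) (m + ρ)).filter
          fun i => charFun m X c i ≠ charFun m X c (i - ρ)) := by
    intro c
    ext i
    simp only [Set.mem_setOf_eq, Finset.coe_filter, Finset.mem_Ico, Set.mem_setOf_eq, hbd]
    constructor
    · intro h
      refine ⟨⟨?_, ?_⟩, h⟩
      · by_contra hlt
        push_neg at hlt
        exact h (by rw [hcf0 c i (by omega), hcf0 c (i - ρ) (by omega)])
      · by_contra hge
        push_neg at hge
        exact h (by rw [hcf0 c i (by omega), hcf0 c (i - ρ) (by omega)])
    · tauto
  set g : ℤ → ℕ := fun i => (Finset.univ.filter fun c : α =>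
      charFun m X c i ≠ charFun m X c (i - ρ)).card with hg
  have hcard : ∑ c : α, Set.ncard {i : ℤ | bdiff ρ (charFun m X c) i ≠ 0}
      = ∑ i ∈ Finset.Ico (0:ℤ) (m + ρ), g i := by
    simp_rw [hset, Set.ncard_coe_finset, hg, Finset.card_filter]
    exact Finset.sum_comm
  rw [hcard]
  have hsplit : ∑ i ∈ Finset.Ico (0:ℤ) (m + ρ), g i
      = (∑ i ∈ Finset.Ico (0:ℤ) ρ, g i + ∑ i ∈ Finset.Ico (ρ:ℤ) m, g i)
        + ∑ i ∈ Finset.Ico (m:ℤ) (m + ρ), g i := by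
    rw [← Finset.Ico_union_Ico_eq_Ico (show (0:ℤ) ≤ m by omega) (show (m:ℤ) ≤ m + ρ by omega),
      Finset.sum_union (Finset.Ico_disjoint_Ico_consecutive _ _ _),
      ← Finset.Ico_union_Ico_eq_Ico (show (0:ℤ) ≤ ρ by omega) (show (ρ:ℤ) ≤ m by omega),
      Finset.sum_union (Finset.Ico_disjoint_Ico_consecutive _ _ _)]
  rw [hsplit]
  -- first strip: each position contributes at most 1
  have h1 : ∑ i ∈ Finset.Ico (0:ℤ) ρ, g i ≤ ρ := by
    calc ∑ i ∈ Finset.Ico (0:ℤ) ρ, g i ≤ ∑ _i ∈ Finset.Ico (0:ℤ) ρ, 1 := by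
          apply Finset.sum_le_sum
          intro i hi
          simp only [Finset.mem_Ico] at hi
          have : (Finset.univ.filter fun c : α =>
              charFun m X c i ≠ charFun m X c (i - ρ)) ⊆ {X i.toNat} := by
            intro c hc
            simp only [Finset.mem_filter] at hc
            rw [hcf0 c (i - ρ) (by omega), hcf1 c i (by omega) (by omega)] at hc
            simp only [Finset.mem_singleton]
            by_contra hne
            exact hc.2 (if_neg fun h => hne h.symm)
          simpa [hg] using (Finset.card_le_card this).trans (by simp)
      _ = ρ := by simp [Int.card_Ico]
  -- last strip: each position contributes at most 1
  have h3 : ∑ i ∈ Finset.Ico (m:ℤ) (m + ρ), g i ≤ ρ := by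
    calc ∑ i ∈ Finset.Ico (m:ℤ) (m + ρ), g i ≤ ∑ _i ∈ Finset.Ico (m:ℤ) (m + ρ), 1 := by
          apply Finset.sum_le_sum
          intro i hi
          simp only [Finset.mem_Ico] at hi
          have : (Finset.univ.filter fun c : α =>
              charFun m X c i ≠ charFun m X c (i - ρ)) ⊆ {X (i - ρ).toNat} := by
            intro c hc
            simp only [Finset.mem_filter] at hc
            rw [hcf0 c i (by omega), hcf1 c (i - ρ) (by omega) (by omega)] at hc
            simp only [Finset.mem_singleton]
            by_contra hne
            exact hc.2 (if_neg fun h => hne h.symm).symm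
          simpa [hg] using (Finset.card_le_card this).trans (by simp)
      _ = ρ := by simp [Int.card_Ico]
  -- middle strip: 0 for matches, 2 for mismatches
  have h2 : ∑ i ∈ Finset.Ico (ρ:ℤ) m, g i ≤ 2 * d := by
    have hstep : ∀ i ∈ Finset.Ico (ρ:ℤ) m,
        g i ≤ 2 * (if X i.toNat ≠ X (i - ρ).toNat then 1 else 0) := by
      intro i hi
      simp only [Finset.mem_Ico] at hi
      by_cases hmm : X i.toNat = X (i - ρ).toNat
      · simp only [hmm, ne_eq, not_true_eq_false, if_false, mul_zero, Nat.le_zero, hg]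
        rw [Finset.card_eq_zero, Finset.filter_eq_empty_iff]
        intro c _
        simp only [ne_eq, not_not]
        rw [hcf1 c i (by omega) (by omega), hcf1 c (i - ρ) (by omega) (by omega), hmm]
      · have hsub : (Finset.univ.filter fun c : α =>
            charFun m X c i ≠ charFun m X c (i - ρ)) ⊆ {X i.toNat, X (i - ρ).toNat} := by
          intro c hc
          simp only [Finset.mem_filter] at hc
          simp only [Finset.mem_insert, Finset.mem_singleton]
          by_contra hne
          push_neg at hne
          apply hc.2
          rw [hcf1 c i (by omega) (by omega), hcf1 c (i - ρ) (by omega) (by omega),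
            if_neg (Ne.symm hne.1), if_neg (Ne.symm hne.2)]
        simp only [hmm, ne_eq, not_false_eq_true, if_true, mul_one, hg]
        exact (Finset.card_le_card hsub).trans ((Finset.card_insert_le _ _).trans (by simp))
    calc ∑ i ∈ Finset.Ico (ρ:ℤ) m, g i
        ≤ ∑ i ∈ Finset.Ico (ρ:ℤ) m, 2 * (if X i.toNat ≠ X (i - ρ).toNat then 1 else 0) :=
          Finset.sum_le_sum hstep
      _ = 2 * ((Finset.Ico (ρ:ℤ) m).filter fun i : ℤ => X i.toNat ≠ X (i - ρ).toNat).card := by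
          rw [← Finset.mul_sum, Finset.card_filter]
      _ ≤ 2 * d := by
          gcongr
          refine le_trans (le_of_eq ?_) hper
          unfold hd
          apply Finset.card_bij (fun i _ => (i - (ρ:ℤ)).toNat)
          · intro i hi
            simp only [Finset.mem_filter, Finset.mem_Ico] at hi
            simp only [Finset.mem_filter, Finset.mem_range]
            constructor
            · omega
            · have : ρ + (i - (ρ:ℤ)).toNat = i.toNat := by omega
              rw [this]
              exact hi.2
          · intro i hi j hj hij
            simp only [Finset.mem_filter, Finset.mem_Ico] at hi hj
            omega
          · intro t ht
            simp only [Finset.mem_filter, Finset.mem_range] at ht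
            refine ⟨(ρ:ℤ) + t, ?_, by omega⟩
            simp only [Finset.mem_filter, Finset.mem_Ico]
            refine ⟨⟨by omega, by omega⟩, ?_⟩
            have h1 : ((ρ:ℤ) + t).toNat = ρ + t := by omega
            have h2 : ((ρ:ℤ) + t - ρ).toNat = t := by omega
            rw [h1, h2]
            exact ht.2
  omega
end

section
/- Let P be a pattern of length m, T a text of length n ≥ m, Q a non-empty string, and j a non-negative integer with j·|Q| ≤ n−m. Then HD(P, T[j|Q| .. m+j|Q|)) = |M(P,Q^*)| + |M(T,Q^*) ∩ [j|Q| .. m+j|Q|)| − μ_j, where μ_j = Σ_{ρ ∈ M(P,Q^*), τ ∈ M(T,Q^*), τ = j|Q|+ρ} (2 − hd(T[τ], P[ρ])) and hd(a,b) denotes 0 if the characters a and b are equal and 1 otherwise. -/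
/-- `M(S, Q^*)`: the set of positions `i ∈ [0..len)` where the length-`len` string `S`
differs from the infinite repetition of the length-`q` string `Q`. -/
def MQ {α : Type*} [DecidableEq α] (len q : ℕ) (S Q : ℕ → α) : Finset ℕ :=
  (Finset.range len).filter fun i => S i ≠ Q (i % q)

/-- for a pattern `P` of length `m`, a text `T` of length `n ≥ m`,
a non-empty string `Q` of length `q`, and `j` with `j·q ≤ n−m`,
`HD(P, T[jq..m+jq)) = |M(P,Q^*)| + |M(T,Q^*) ∩ [jq..m+jq)| − μ_j`, where
`μ_j = Σ_{ρ∈M(P,Q^*), τ∈M(T,Q^*), τ=jq+ρ} (2 − hd(T[τ],P[ρ]))`. -/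
theorem stmt_11 {α : Type*} [DecidableEq α] (m n q : ℕ) (hq : 1 ≤ q) (hmn : m ≤ n)
    (P T Q : ℕ → α) (j : ℕ) (hj : j * q ≤ n - m) :
    (hd m P (fun t => T (j * q + t)) : ℤ)
      = (MQ m q P Q).card
        + ((MQ n q T Q).filter fun τ => j * q ≤ τ ∧ τ < m + j * q).card
        - ∑ ρ ∈ MQ m q P Q, ∑ τ ∈ MQ n q T Q,
            (if τ = j * q + ρ then 2 - (if T τ = P ρ then (0 : ℤ) else 1) else 0) := by
  classical
  have hmod : ∀ i : ℕ, (j * q + i) % q = i % q := fun i => by rw [Nat.add_comm]; exact Nat.add_mul_mod_self_right i j q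
  -- rewrite the filtered card as an image
  have hcard : ((MQ n q T Q).filter fun τ => j * q ≤ τ ∧ τ < m + j * q)
      = Finset.image (fun i => j * q + i)
          ((Finset.range m).filter fun i => T (j * q + i) ≠ Q (i % q)) := by
    ext τ
    simp only [MQ, Finset.mem_filter, Finset.mem_image, Finset.mem_range]
    constructor
    · rintro ⟨⟨hτn, hT⟩, hle, hlt'⟩
      refine ⟨τ - j * q, ⟨by omega, ?_⟩, by omega⟩
      have h1 : j * q + (τ - j * q) = τ := by omega
      rw [← h1, hmod] at hT
      exact hT
    · rintro ⟨i, ⟨hi, hT⟩, rfl⟩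
      rw [hmod]
      exact ⟨⟨by omega, hT⟩, by omega, by omega⟩
  have hinj : Set.InjOn (fun i => j * q + i)
      ((Finset.range m).filter fun i => T (j * q + i) ≠ Q (i % q)) := by
    intro a _ b _ h
    exact Nat.add_left_cancel h
  -- collapse the double sum
  have hsum : (∑ ρ ∈ MQ m q P Q, ∑ τ ∈ MQ n q T Q,
        (if τ = j * q + ρ then 2 - (if T τ = P ρ then (0 : ℤ) else 1) else 0))
      = ∑ ρ ∈ MQ m q P Q,
          (if T (j * q + ρ) ≠ Q (ρ % q) then 2 - (if T (j * q + ρ) = P ρ then (0 : ℤ) else 1)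
            else 0) := by
    refine Finset.sum_congr rfl fun ρ hρ => ?_
    rw [Finset.sum_ite_eq' (MQ n q T Q) (j * q + ρ)
      (fun τ => 2 - (if T τ = P ρ then (0 : ℤ) else 1))]
    have hρm : ρ < m := by
      simp only [MQ, Finset.mem_filter, Finset.mem_range] at hρ
      exact hρ.1
    have : (j * q + ρ ∈ MQ n q T Q) ↔ T (j * q + ρ) ≠ Q (ρ % q) := by
      simp only [MQ, Finset.mem_filter, Finset.mem_range, hmod]
      constructor
      · exact fun h => h.2
      · exact fun h => ⟨by omega, h⟩
    simp [this]
  rw [hsum, hcard, Finset.card_image_of_injOn hinj]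
  simp only [hd, MQ, Finset.card_filter, Finset.sum_filter]
  push_cast
  rw [← Finset.sum_add_distrib, ← Finset.sum_sub_distrib]
  refine Finset.sum_congr rfl fun i _ => ?_
  split_ifs <;> simp_all <;> ring
end
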